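/- arXiv:math/0409349 — 3 statements merged into one kernel-verified Lean document; each statement's English description precedes it below -/
import Mathlib

section
/- Let X and Y be compact subsets of the plane ℝ² such that ℝ² \ X and ℝ² \ Y are both connected (neither X nor Y separates the plane). Then for every connected component C of X ∩ Y, the complement ℝ² \ C is connected; equivalently, C equals its topological hull. -/
/-!
Let `C` be a component of `X ∩ Y` and suppose `U` is a bounded component of `ℝ² \ C`. Its
frontier lies in `C ⊆ X`, so the connected unbounded set `ℝ² \ X` avoids the frontier of `U`
and hence misses `U` entirely: `U ⊆ X`, and likewise `U ⊆ Y`. Then `C ∪ closure U` is a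
connected subset of `X ∩ Y`, so `U ⊆ C`, which is absurd. Thus every component of `ℝ² \ C` is
unbounded; since the complement of a large disc is connected, they all coincide.
-/

open Set Metric Bornology

protected theorem IsClosed.connectedComponentIn {α : Type*} [TopologicalSpace α] {F : Set α}
    (hF : IsClosed F) (x : α) : IsClosed (connectedComponentIn F x) := by
  by_cases hx : x ∈ F
  · refine isClosed_of_closure_subset <| isPreconnected_connectedComponentIn.closure
      |>.subset_connectedComponentIn (subset_closure (mem_connectedComponentIn hx)) ?_
    exact closure_minimal (connectedComponentIn_subset F x) hF
  · rw [connectedComponentIn_eq_empty hx]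
    exact isClosed_empty

theorem frontier_connectedComponentIn_subset_compl {α : Type*} [TopologicalSpace α]
    [LocallyConnectedSpace α] {F : Set α} (hF : IsOpen F) (x : α) :
    frontier (connectedComponentIn F x) ⊆ Fᶜ := by
  intro y hy hyF
  have hUo : IsOpen (connectedComponentIn F x) := hF.connectedComponentIn
  obtain ⟨z, hzy, hzx⟩ := mem_closure_iff.1 hy.1 _ hF.connectedComponentIn
    (mem_connectedComponentIn hyF)
  have hyz : connectedComponentIn F y ⊆ connectedComponentIn F x := by
    rw [connectedComponentIn_eq hzx]
    exact isPreconnected_connectedComponentIn.subset_connectedComponentIn hzy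
      (connectedComponentIn_subset F y)
  exact hy.2 (by rw [hUo.interior_eq]; exact hyz (mem_connectedComponentIn hyF))

/-- `Zᶜ` is covered by the disjoint open sets `U` and `(closure U)ᶜ`. -/
theorem IsOpen.subset_of_frontier_subset_of_isPreconnected_compl {α : Type*}
    [TopologicalSpace α] {Z U : Set α} (hU : IsOpen U) (hZ : IsPreconnected Zᶜ)
    (hfr : frontier U ⊆ Z) (hout : (Zᶜ \ closure U).Nonempty) : U ⊆ Z := by
  have hcov : Zᶜ ⊆ U ∪ (closure U)ᶜ := by
    intro y hyZ
    by_cases hyU : y ∈ U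
    · exact Or.inl hyU
    · exact Or.inr fun hyc => hyZ (hfr (hU.frontier_eq ▸ ⟨hyc, hyU⟩))
  rcases hZ.subset_or_subset hU isClosed_closure.isOpen_compl
      (disjoint_compl_right.mono_left subset_closure) hcov with hZU | hZU
  · obtain ⟨y, hyZ, hyU⟩ := hout
    exact absurd (subset_closure (hZU hyZ)) hyU
  · exact fun y hyU => by_contra fun hyZ => hZU hyZ (subset_closure hyU)

section NormedSpace

variable {E : Type*} [NormedAddCommGroup E] [NormedSpace ℝ E]

theorem isConnected_compl_closedBall_zero (h : 1 < Module.rank ℝ E) {R : ℝ} (hR : 0 ≤ R) :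
    IsConnected (closedBall (0 : E) R)ᶜ := by
  have hpolar : (closedBall (0 : E) R)ᶜ = (fun p : ℝ × E => p.1 • p.2) '' Ioi R ×ˢ sphere 0 1 := by
    ext w
    simp only [mem_compl_iff, mem_closedBall, dist_zero_right, not_le, mem_image, mem_prod,
      mem_Ioi, mem_sphere_iff_norm, sub_zero, Prod.exists]
    constructor
    · intro hw
      have hw0 : ‖w‖ ≠ 0 := (hR.trans_lt hw).ne'
      exact ⟨‖w‖, ‖w‖⁻¹ • w, ⟨hw, by rw [norm_smul, norm_inv, norm_norm, inv_mul_cancel₀ hw0]⟩,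
        by rw [smul_smul, mul_inv_cancel₀ hw0, one_smul]⟩
    · rintro ⟨t, v, ⟨ht, hv⟩, rfl⟩
      rwa [norm_smul, hv, mul_one, Real.norm_of_nonneg (hR.trans ht.le)]
  rw [hpolar]
  exact (isConnected_Ioi.prod (isConnected_sphere h 0 zero_le_one)).image _
    (by fun_prop : Continuous fun p : ℝ × E => p.1 • p.2).continuousOn

theorem Bornology.IsBounded.isConnected_compl_of_forall_not_isBounded
    (h : 1 < Module.rank ℝ E) {K : Set E} (hK : IsBounded K)
    (hcomp : ∀ a ∉ K, ¬IsBounded (connectedComponentIn Kᶜ a)) : IsConnected Kᶜ := by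
  obtain ⟨R, hR, hKR⟩ := hK.subset_closedBall_lt 0 (0 : E)
  have hA := isConnected_compl_closedBall_zero h hR.le
  have hAK : (closedBall (0 : E) R)ᶜ ⊆ Kᶜ := compl_subset_compl.2 hKR
  obtain ⟨p, hp⟩ := hA.nonempty
  suffices Kᶜ ⊆ connectedComponentIn Kᶜ p by
    rw [← (connectedComponentIn_subset _ _).antisymm this]
    exact isConnected_connectedComponentIn_iff.2 (hAK hp)
  intro a ha
  obtain ⟨q, hqa, hqA⟩ : ∃ q ∈ connectedComponentIn Kᶜ a, q ∉ closedBall 0 R :=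
    not_subset.1 fun hsub => hcomp a ha (isBounded_closedBall.subset hsub)
  have hpa : p ∈ connectedComponentIn Kᶜ a := by
    rw [connectedComponentIn_eq hqa]
    exact hA.isPreconnected.subset_connectedComponentIn hqA hAK hp
  exact connectedComponentIn_eq hpa ▸ mem_connectedComponentIn ha

variable [Nontrivial E]

theorem IsOpen.subset_of_frontier_subset_of_isBounded {Z U : Set E} (hU : IsOpen U)
    (hUb : IsBounded U) (hZb : IsBounded Z) (hZ : IsPreconnected Zᶜ) (hfr : frontier U ⊆ Z) :
    U ⊆ Z := by
  refine hU.subset_of_frontier_subset_of_isPreconnected_compl hZ hfr ?_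
  by_contra! hempty
  refine NormedSpace.unbounded_univ ℝ E ((hZb.union hUb.closure).subset fun y _ => ?_)
  by_contra! hy
  rw [mem_union, not_or] at hy
  exact hempty.subset ⟨hy.1, hy.2⟩

theorem not_isBounded_connectedComponentIn_compl_connectedComponentIn_inter {X Y : Set E}
    (hXcl : IsClosed X) (hYcl : IsClosed Y) (hXb : IsBounded X) (hYb : IsBounded Y)
    (hXc : IsPreconnected Xᶜ) (hYc : IsPreconnected Yᶜ) {x a : E}
    (ha : a ∉ connectedComponentIn (X ∩ Y) x) :
    ¬IsBounded (connectedComponentIn (connectedComponentIn (X ∩ Y) x)ᶜ a) := by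
  set C := connectedComponentIn (X ∩ Y) x
  set U := connectedComponentIn Cᶜ a
  intro hUb
  have hCcl : IsClosed C := (hXcl.inter hYcl).connectedComponentIn x
  have hUo : IsOpen U := hCcl.isOpen_compl.connectedComponentIn
  have hfr : frontier U ⊆ C := by
    simpa only [compl_compl] using frontier_connectedComponentIn_subset_compl hCcl.isOpen_compl a
  have hCXY : C ⊆ X ∩ Y := connectedComponentIn_subset _ _
  have hUX : U ⊆ X := hUo.subset_of_frontier_subset_of_isBounded hUb hXb hXc
    (hfr.trans (hCXY.trans inter_subset_left))
  have hUY : U ⊆ Y := hUo.subset_of_frontier_subset_of_isBounded hUb hYb hYc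
    (hfr.trans (hCXY.trans inter_subset_right))
  have haU : a ∈ U := mem_connectedComponentIn ha
  obtain ⟨z, hz⟩ : (frontier U).Nonempty :=
    nonempty_frontier_iff.2 ⟨⟨a, haU⟩, fun h => NormedSpace.unbounded_univ ℝ E (h ▸ hUb)⟩
  have hCU : IsPreconnected (C ∪ closure U) :=
    isPreconnected_connectedComponentIn.union' ⟨z, hfr hz, hz.1⟩
      isPreconnected_connectedComponentIn.closure
  have hCU_sub : C ∪ closure U ⊆ C :=
    (hCU.subset_connectedComponentIn (Or.inl (hfr hz)) (union_subset hCXY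
      (closure_minimal (subset_inter hUX hUY) (hXcl.inter hYcl)))).trans
      (connectedComponentIn_eq (hfr hz)).symm.subset
  exact connectedComponentIn_subset _ _ haU (hCU_sub (Or.inr (subset_closure haU)))

end NormedSpace

/-- If `X` and `Y` are compact subsets of the plane neither of which separates the plane,
then no connected component of `X ∩ Y` separates the plane: the complement of each
component of `X ∩ Y` is connected (equivalently, each component equals its topological
hull). -/
theorem complement_of_component_connected
    (X Y : Set (EuclideanSpace ℝ (Fin 2)))
    (hX : IsCompact X) (hY : IsCompact Y)
    (hXc : IsConnected Xᶜ) (hYc : IsConnected Yᶜ) :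
    ∀ x ∈ X ∩ Y, IsConnected (connectedComponentIn (X ∩ Y) x)ᶜ := by
  intro x _
  have hrank : 1 < Module.rank ℝ (EuclideanSpace ℝ (Fin 2)) := by
    rw [← Module.finrank_eq_rank, finrank_euclideanSpace_fin]
    exact_mod_cast one_lt_two
  have hC : IsBounded (connectedComponentIn (X ∩ Y) x) :=
    (hX.isBounded.subset inter_subset_left).subset (connectedComponentIn_subset _ _)
  exact hC.isConnected_compl_of_forall_not_isBounded hrank fun _ ha =>
    not_isBounded_connectedComponentIn_compl_connectedComponentIn_inter hX.isClosed hY.isClosed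
      hX.isBounded hY.isBounded hXc.isPreconnected hYc.isPreconnected ha
end

section
/- Let C be a continuum in the plane ℝ² (a nonempty compact connected subset of ℝ²) such that ℝ² \ C is connected. Then the frontier Fr(C) of C in ℝ² is connected. -/
/-!
The plane is unicoherent: if it is the union of two closed connected sets `A` and `B`, then
`A ∩ B` is connected. Applied to `A = closure C` and `B = closure Cᶜ` this is the claim, since
`frontier C = closure C ∩ closure Cᶜ`. For unicoherence, a separation of `A ∩ B` gives by Urysohn
a continuous `u` equal to `0` on one part and `1` on the other. Gluing `exp (2πi u)` on `A` with
`1` on `B` gives a continuous map to `ℂ \ {0}`, which has a continuous logarithm `v` because the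
plane is simply connected. On the connected sets `B` and `A` the functions `v` and `v - 2πi u`
take values in the discrete set `2πiℤ`, so they are constant, and hence so is `u` on `A ∩ B`.
-/

open Complex Set
open scoped Real

theorem IsPreconnected.eq_of_exp_eq_one {X : Type*} [TopologicalSpace X] {S : Set X}
    (hS : IsPreconnected S) {h : X → ℂ} (hc : ContinuousOn h S)
    (h1 : ∀ x ∈ S, exp (h x) = 1) {x y : X} (hx : x ∈ S) (hy : y ∈ S) : h x = h y := by
  refine hS.constant_of_mapsTo (T := AddSubgroup.zmultiples (2 * π * I))
    ⟨NormedSpace.discreteTopology_zmultiples _⟩ hc (fun z hz => ?_) hx hy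
  obtain ⟨n, hn⟩ := exp_eq_one_iff.mp (h1 z hz)
  exact AddSubgroup.mem_zmultiples_iff.mpr ⟨n, by rw [hn, zsmul_eq_mul]⟩

theorem exists_continuous_log {X : Type*} [TopologicalSpace X] [SimplyConnectedSpace X]
    [LocallyPathConnectedSpace X] (f : C(X, ℂ)) (hf : ∀ x, f x ≠ 0) :
    ∃ v : C(X, ℂ), ∀ x, exp (v x) = f x := by
  obtain ⟨x₀⟩ := (inferInstance : Nonempty X)
  obtain ⟨v, ⟨-, hv⟩, -⟩ := isCoveringMapOn_exp.existsUnique_continuousMap_lifts f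
    (exp_log (hf x₀)) hf
  exact ⟨v, congrFun hv⟩

section Unicoherence

variable {X : Type*} [TopologicalSpace X] [SimplyConnectedSpace X] [LocallyPathConnectedSpace X]
  {A B : Set X}

theorem eq_of_exp_eq_one_on_inter (hA : IsClosed A) (hB : IsClosed B) (hAc : IsPreconnected A)
    (hBc : IsPreconnected B) (hAB : A ∪ B = univ) (u : C(X, ℝ))
    (hu : ∀ x ∈ A ∩ B, exp (2 * π * I * u x) = 1) {a b : X} (ha : a ∈ A ∩ B)
    (hb : b ∈ A ∩ B) : u a = u b := by
  classical
  have hfrontier : frontier A ⊆ A ∩ B := by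
    rw [frontier_eq_closure_inter_closure, hA.closure_eq]
    refine inter_subset_inter_right A (hB.closure_subset_iff.mpr fun y hy => ?_)
    exact (hAB.symm.subset (mem_univ y)).resolve_left hy
  let g : C(X, ℂ) := ⟨A.piecewise (fun x => exp (2 * π * I * u x)) 1,
    Continuous.piecewise (fun x hx => hu x (hfrontier hx)) (by fun_prop) continuous_const⟩
  obtain ⟨v, hv⟩ := exists_continuous_log g (fun x => by
    by_cases hx : x ∈ A <;> simp [g, hx, exp_ne_zero])
  have hv_B : v a = v b := hBc.eq_of_exp_eq_one v.continuous.continuousOn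
    (fun x hxB => by
      by_cases hxA : x ∈ A
      · rw [hv, ContinuousMap.coe_mk, piecewise_eq_of_mem _ _ _ hxA, hu x ⟨hxA, hxB⟩]
      · rw [hv, ContinuousMap.coe_mk, piecewise_eq_of_notMem _ _ _ hxA, Pi.one_apply])
    ha.2 hb.2
  have hv_A : v a - 2 * π * I * u a = v b - 2 * π * I * u b :=
    hAc.eq_of_exp_eq_one (h := fun x => v x - 2 * π * I * u x) (by fun_prop)
      (fun x hx => by
        rw [exp_sub, hv, ContinuousMap.coe_mk, piecewise_eq_of_mem _ _ _ hx,
          div_self (exp_ne_zero _)])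
      ha.1 hb.1
  have : 2 * π * I * u a = 2 * π * I * u b := by linear_combination hv_B - hv_A
  exact_mod_cast mul_left_cancel₀ two_pi_I_ne_zero this

theorem isPreconnected_inter_of_union_eq_univ [NormalSpace X] (hA : IsClosed A)
    (hB : IsClosed B) (hAc : IsPreconnected A) (hBc : IsPreconnected B) (hAB : A ∪ B = univ) :
    IsPreconnected (A ∩ B) := by
  rw [isPreconnected_iff_subset_of_fully_disjoint_closed (hA.inter hB)]
  intro U V hU hV hsub hUV
  by_contra! hsplit
  obtain ⟨a, ha, haV⟩ := not_subset.mp hsplit.2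
  obtain ⟨b, hb, hbU⟩ := not_subset.mp hsplit.1
  obtain ⟨u, hu0, hu1, -⟩ := exists_continuous_zero_one_of_isClosed hU hV hUV
  have hu : ∀ x ∈ A ∩ B, exp (2 * π * I * u x) = 1 := by
    intro x hx
    rcases hsub hx with hxU | hxV
    · simp [hu0 hxU]
    · simp [hu1 hxV]
  have hab := eq_of_exp_eq_one_on_inter hA hB hAc hBc hAB u hu ha hb
  rw [hu0 ((hsub ha).resolve_right haV), hu1 ((hsub hb).resolve_left hbU)] at hab
  exact zero_ne_one hab

end Unicoherence

theorem frontier_connected_of_compl_connected_general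
    (C : Set (EuclideanSpace ℝ (Fin 2)))
    (hCconn : IsConnected C) (hcompl : IsConnected Cᶜ) :
    IsConnected (frontier C) := by
  refine ⟨nonempty_frontier_iff.mpr ⟨hCconn.nonempty, fun h => ?_⟩, ?_⟩
  · simpa [h] using hcompl.nonempty
  rw [frontier_eq_closure_inter_closure]
  refine isPreconnected_inter_of_union_eq_univ isClosed_closure isClosed_closure
    hCconn.isPreconnected.closure hcompl.isPreconnected.closure ?_
  exact eq_univ_of_subset (union_subset_union subset_closure subset_closure) (union_compl_self C)

/-- If `C` is a continuum in the plane (a nonempty compact connected set) whose complement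
is connected, then the frontier of `C` is connected. -/
theorem frontier_connected_of_compl_connected
    (C : Set (EuclideanSpace ℝ (Fin 2)))
    (hC : IsCompact C) (hCconn : IsConnected C) (hcompl : IsConnected Cᶜ) :
    IsConnected (frontier C) :=
  frontier_connected_of_compl_connected_general C hCconn hcompl
end

section
/- Let S be a simply connected compact subset of the plane ℝ² and let C ⊆ S be a simple closed curve. Then every bounded connected component of ℝ² \ C is contained in S; that is, the bounded region enclosed by C lies in S. -/
/-!
Suppose a point `q` of a bounded component `U` of `ℝ² \ C` lies outside `S`. Read in `ℂ`, the
map `z ↦ z - q` does not vanish on the simply connected set `S`, so it has a continuous logarithm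
on `C ⊆ S`. Extend that logarithm to the plane by Tietze; gluing its exponential on `U` with
`z ↦ z - q` off `U` (they agree on `∂U ⊆ C`) gives a nonvanishing map on the plane, which has a
logarithm as well. On a circle around `q` enclosing `U` this is a continuous logarithm of
`z - q`, and there is none.
-/

/-- A simple closed curve in the plane: a subset homeomorphic to the unit circle, i.e.
the image of an injective continuous map from the circle into the plane. -/
def IsSimpleClosedCurve (C : Set (EuclideanSpace ℝ (Fin 2))) : Prop :=
  ∃ f : ↥(Metric.sphere (0 : EuclideanSpace ℝ (Fin 2)) 1) → EuclideanSpace ℝ (Fin 2),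
    Continuous f ∧ Function.Injective f ∧ Set.range f = C

open Complex Metric Bornology

theorem Complex.not_continuousOn_sphere_of_exp_eq {R : ℝ} (hR : 0 < R) {g : ℂ → ℂ}
    (hg : ∀ z ∈ sphere (0 : ℂ) R, exp (g z) = z) : ¬ ContinuousOn g (sphere 0 R) := by
  intro hcont
  set c : ℝ → ℂ := fun t ↦ R * exp (t * I)
  have hc_mem : ∀ t, c t ∈ sphere (0 : ℂ) R := fun t ↦ by
    simp [c, norm_exp_ofReal_mul_I, abs_of_pos hR]
  set h : ℝ → ℂ := fun t ↦ g (c t) - t * I - Real.log R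
  have h_mem : ∀ t, h t ∈ AddSubgroup.zmultiples (2 * Real.pi * I) := fun t ↦ by
    obtain ⟨n, hn⟩ := exp_eq_one_iff.mp (show exp (h t) = 1 by
      have : (R : ℂ) ≠ 0 := ofReal_ne_zero.mpr hR.ne'
      simp only [h, exp_sub, hg _ (hc_mem t), c, ← ofReal_exp, Real.exp_log hR]
      field_simp)
    exact ⟨n, by simp [hn, zsmul_eq_mul]⟩
  have h_cont : Continuous h :=
    ((hcont.comp_continuous (by fun_prop) hc_mem).sub (by fun_prop)).sub continuous_const
  have h_const := isPreconnected_univ.constant_of_mapsTo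
    (isDiscrete_iff_discreteTopology.mpr (NormedSpace.discreteTopology_zmultiples _))
    h_cont.continuousOn (fun t _ ↦ h_mem t) (x := 0) (y := 2 * Real.pi) trivial trivial
  have hc_period : c (2 * Real.pi) = c 0 := by simp [c, exp_two_pi_mul_I]
  simp only [h, hc_period] at h_const
  have : (2 * Real.pi * I : ℂ) = 0 := by push_cast at h_const; linear_combination h_const
  simp [Real.pi_ne_zero, I_ne_zero] at this

theorem IsCoveringMap.exists_lift_comp_of_simplyConnected {E X A Y : Type*} [TopologicalSpace E]
    [TopologicalSpace X] [TopologicalSpace A] [TopologicalSpace Y] {p : E → X}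
    (cov : IsCoveringMap p) [PathConnectedSpace A] [LocallyPathConnectedSpace A]
    [SimplyConnectedSpace Y] (f : C(Y, X)) (i : C(A, Y)) {a₀ : A} {e₀ : E}
    (he : p e₀ = f (i a₀)) : ∃ F : C(A, E), p ∘ F = f.comp i := by
  refine (cov.existsUnique_continuousMap_lifts_of_range_le (f := f.comp i) he ?_).exists.imp
    fun _ ↦ And.right
  rintro _ ⟨γ, rfl⟩
  have h_comp : FundamentalGroup.map (f.comp i) a₀ γ =
      FundamentalGroup.map f (i a₀) (FundamentalGroup.map i a₀ γ) := by
    simp only [FundamentalGroup.map_apply, Path.Homotopic.Quotient.map_comp]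
  rw [h_comp, Subsingleton.elim (FundamentalGroup.map i a₀ γ) 1, map_one]
  exact one_mem _

theorem exists_exp_eq_comp_of_simplyConnected {A Y : Type*} [TopologicalSpace A]
    [TopologicalSpace Y] [PathConnectedSpace A] [LocallyPathConnectedSpace A]
    [SimplyConnectedSpace Y] (f : C(Y, ℂ)) (hf : ∀ y, f y ≠ 0) (i : C(A, Y)) :
    ∃ ℓ : C(A, ℂ), ∀ a, exp (ℓ a) = f (i a) := by
  let f' : C(Y, {z : ℂ // z ≠ 0}) := ⟨fun y ↦ ⟨f y, hf y⟩, by fun_prop⟩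
  obtain ⟨a₀⟩ := ‹PathConnectedSpace A›.nonempty
  obtain ⟨ℓ, hℓ⟩ := isCoveringMap_exp.exists_lift_comp_of_simplyConnected f' i
    (e₀ := log (f (i a₀))) (Subtype.ext (exp_log (hf _)))
  exact ⟨ℓ, fun a ↦ congrArg Subtype.val (congrFun hℓ a)⟩

theorem IsOpen.frontier_connectedComponentIn_subset {X : Type*} [TopologicalSpace X]
    [LocallyConnectedSpace X] {F : Set X} (hF : IsOpen F) (x : X) :
    frontier (connectedComponentIn F x) ⊆ Fᶜ := by
  intro y ⟨hy_cl, hy_int⟩ hyF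
  obtain ⟨z, hzy, hzx⟩ := mem_closure_iff.mp hy_cl _ hF.connectedComponentIn
    (mem_connectedComponentIn hyF)
  rw [hF.connectedComponentIn.interior_eq, connectedComponentIn_eq hzx,
    ← connectedComponentIn_eq hzy] at hy_int
  exact hy_int (mem_connectedComponentIn hyF)

theorem exists_exp_eq_of_frontier_subset {X : Type*} [TopologicalSpace X] [NormalSpace X]
    [SimplyConnectedSpace X] [LocallyPathConnectedSpace X] {K U : Set X} (hK : IsClosed K)
    (hUK : frontier U ⊆ K) (f : C(X, ℂ)) (hf : ∀ x ∉ U, f x ≠ 0) (ℓ : C(K, ℂ))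
    (hℓ : ∀ z : K, exp (ℓ z) = f z) : ∃ G : C(X, ℂ), ∀ x ∉ U, exp (G x) = f x := by
  classical
  obtain ⟨L, hL⟩ := ℓ.exists_restrict_eq hK
  have hLK : ∀ x (hx : x ∈ K), exp (L x) = f x := fun x hx ↦ by
    simpa [← hL] using hℓ ⟨x, hx⟩
  let F : C(X, ℂ) := ⟨U.piecewise (fun x ↦ exp (L x)) f,
    Continuous.piecewise (fun x hx ↦ hLK x (hUK hx)) (by fun_prop) f.continuous⟩
  have hF : ∀ x, F x ≠ 0 := fun x ↦ by
    by_cases hx : x ∈ U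
    · simp [F, hx, exp_ne_zero]
    · simpa [F, hx] using hf x hx
  obtain ⟨G, hG⟩ := exists_exp_eq_comp_of_simplyConnected F hF (.id X)
  exact ⟨G, fun x hx ↦ by simpa [F, hx] using hG x⟩

theorem exists_exp_ne_sub_of_frontier_subset {V : Type*} [NormedAddCommGroup V]
    [NormedSpace ℝ V] (e : V ≃ₗᵢ[ℝ] ℂ) {K U : Set V} (hK : IsClosed K) (hU : IsBounded U)
    (hUK : frontier U ⊆ K) {q : V} (hq : q ∈ U) (ℓ : C(K, ℂ)) :
    ∃ z : K, exp (ℓ z) ≠ e (z - q) := by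
  by_contra! hℓ
  obtain ⟨G, hG⟩ := exists_exp_eq_of_frontier_subset hK hUK
    ⟨fun x ↦ e (x - q), by fun_prop⟩
    (fun x hx ↦ by simpa [sub_eq_zero] using (ne_of_mem_of_not_mem hq hx).symm) ℓ hℓ
  obtain ⟨r, hr⟩ := hU.subset_ball q
  have hr_pos : 0 < r := pos_of_mem_ball (hr hq)
  refine not_continuousOn_sphere_of_exp_eq hr_pos (g := fun w ↦ G (q + e.symm w))
    (fun w hw ↦ ?_) (by fun_prop)
  have : q + e.symm w ∉ U := fun h ↦ by
    simpa [dist_eq_norm, mem_sphere_zero_iff_norm.mp hw] using hr h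
  simpa using hG _ this

instance {n : ℕ} : LocallyPathConnectedSpace (sphere (0 : EuclideanSpace ℝ (Fin (n + 1))) 1) :=
  ChartedSpace.locallyPathConnectedSpace (EuclideanSpace ℝ (Fin n)) _

namespace IsSimpleClosedCurve

variable {C : Set (EuclideanSpace ℝ (Fin 2))}

theorem isCompact (hC : IsSimpleClosedCurve C) : IsCompact C := by
  obtain ⟨f, hf, -, rfl⟩ := hC
  exact isCompact_range hf

theorem nonempty_homeomorph (hC : IsSimpleClosedCurve C) :
    Nonempty (sphere (0 : EuclideanSpace ℝ (Fin 2)) 1 ≃ₜ C) := by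
  obtain ⟨f, hf, hf_inj, rfl⟩ := hC
  exact ⟨(hf.isClosedEmbedding hf_inj).isEmbedding.toHomeomorph⟩

theorem pathConnectedSpace (hC : IsSimpleClosedCurve C) : PathConnectedSpace C := by
  obtain ⟨e⟩ := hC.nonempty_homeomorph
  have h_rank : 1 < Module.rank ℝ (EuclideanSpace ℝ (Fin 2)) := by
    rw [← Module.finrank_eq_rank, finrank_euclideanSpace_fin]
    norm_num
  have : PathConnectedSpace (sphere (0 : EuclideanSpace ℝ (Fin 2)) 1) :=
    isPathConnected_iff_pathConnectedSpace.mp (isPathConnected_sphere h_rank 0 zero_le_one)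
  exact e.surjective.pathConnectedSpace e.continuous

theorem locallyPathConnectedSpace (hC : IsSimpleClosedCurve C) :
    LocallyPathConnectedSpace C := by
  obtain ⟨e⟩ := hC.nonempty_homeomorph
  exact e.isQuotientMap.locallyPathConnectedSpace

end IsSimpleClosedCurve

theorem bounded_component_subset_of_simplyConnected_general
    (S : Set (EuclideanSpace ℝ (Fin 2)))
    (hSsc : SimplyConnectedSpace S)
    (C : Set (EuclideanSpace ℝ (Fin 2)))
    (hCS : C ⊆ S) (hC : IsSimpleClosedCurve C) :
    ∀ p ∈ Cᶜ, Bornology.IsBounded (connectedComponentIn Cᶜ p) →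
      connectedComponentIn Cᶜ p ⊆ S := by
  intro p _ hbd q hq
  by_contra hqS
  have := hC.pathConnectedSpace
  have := hC.locallyPathConnectedSpace
  let e := Complex.orthonormalBasisOneI.repr.symm
  obtain ⟨ℓ, hℓ⟩ := exists_exp_eq_comp_of_simplyConnected ⟨fun z : S ↦ e (z - q), by fun_prop⟩
    (fun z ↦ by simpa [sub_eq_zero] using ne_of_mem_of_not_mem z.2 hqS)
    ⟨Set.inclusion hCS, by fun_prop⟩
  have hC_closed := hC.isCompact.isClosed
  obtain ⟨z, hz⟩ := exists_exp_ne_sub_of_frontier_subset e hC_closed hbd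
    ((hC_closed.isOpen_compl.frontier_connectedComponentIn_subset p).trans (compl_compl C).subset)
    hq ℓ
  exact hz (hℓ z)

/-- If `S` is a simply connected compact subset of the plane and `C ⊆ S` is a simple
closed curve, then every bounded connected component of `ℝ² \ C` is contained in `S`. -/
theorem bounded_component_subset_of_simplyConnected
    (S : Set (EuclideanSpace ℝ (Fin 2)))
    (hScpt : IsCompact S) (hSsc : SimplyConnectedSpace S)
    (C : Set (EuclideanSpace ℝ (Fin 2)))
    (hCS : C ⊆ S) (hC : IsSimpleClosedCurve C) :
    ∀ p ∈ Cᶜ, Bornology.IsBounded (connectedComponentIn Cᶜ p) →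
      connectedComponentIn Cᶜ p ⊆ S :=
  bounded_component_subset_of_simplyConnected_general S hSsc C hCS hC
end
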